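/- For every n ≥ 0, the n-th Motzkin number M(n) equals the constant term of the Laurent polynomial (x^{-1} + 1 + x)^n · (1 − x^2). -/

import Mathlib

/-- Laurent polynomials in one variable with integer coefficients. -/
abbrev LP1 := AddMonoidAlgebra ℤ ℤ

/-- The monomial `x^n` in `LP1`. -/
noncomputable def X (n : ℤ) : LP1 := AddMonoidAlgebra.single n 1

namespace MotzkinAux

/-- trinomial coefficients: coefficient of `x^k` in `(x⁻¹+1+x)^n`. -/
noncomputable def t (n : ℕ) (k : ℤ) : ℤ := (((X (-1) + 1 + X 1) ^ n : LP1)).coeff k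

lemma t_zero (k : ℤ) : t 0 k = if k = 0 then 1 else 0 := by
  simp only [t, pow_zero, AddMonoidAlgebra.one_def, AddMonoidAlgebra.coeff_single, Finsupp.single_apply]
  simp [eq_comm]

lemma coeff_mul_X (f : LP1) (a k : ℤ) : (f * X a).coeff k = f.coeff (k - a) := by
  rw [X, AddMonoidAlgebra.coeff_mul_single_apply, mul_one, sub_eq_add_neg]

lemma pascal (n : ℕ) (k : ℤ) : t (n + 1) k = t n (k - 1) + t n k + t n (k + 1) := by
  have h : ((X (-1) + 1 + X 1) ^ (n + 1) : LP1)
      = (X (-1) + 1 + X 1) ^ n * X (-1) + (X (-1) + 1 + X 1) ^ n * 1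
        + (X (-1) + 1 + X 1) ^ n * X 1 := by ring
  show (((X (-1) + 1 + X 1) ^ (n + 1) : LP1)).coeff k = _
  rw [h, mul_one]
  rw [AddMonoidAlgebra.coeff_add, AddMonoidAlgebra.coeff_add, Finsupp.add_apply, Finsupp.add_apply, coeff_mul_X, coeff_mul_X]
  rw [show k - -1 = k + 1 by ring]
  show t n (k + 1) + t n k + t n (k - 1) = _
  ring

lemma t_symm (n : ℕ) (k : ℤ) : t n (-k) = t n k := by
  induction n generalizing k with
  | zero => rw [t_zero, t_zero]; simp [neg_eq_zero]
  | succ n ih =>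
    rw [pascal, pascal]
    rw [show -k - 1 = -(k + 1) by ring, show -k + 1 = -(k - 1) by ring, ih, ih, ih]
    ring

lemma deriv (n : ℕ) (k : ℤ) :
    k * t (n + 1) k = ((n : ℤ) + 1) * (t n (k - 1) - t n (k + 1)) := by
  induction n generalizing k with
  | zero =>
    rw [pascal]
    simp only [t_zero]
    push_cast
    split_ifs <;> omega
  | succ n ih =>
    have h1 := ih (k - 1)
    have h2 := ih k
    have h3 := ih (k + 1)
    have p1 := pascal n (k - 1)
    have p3 := pascal n (k + 1)
    have key : t (n + 1) (k - 1) - t (n + 1) (k + 1)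
        = t n (k - 1 - 1) + t n (k - 1) - t n (k + 1) - t n (k + 1 + 1) := by
      rw [p1, p3]; ring_nf
    rw [pascal]
    simp only [show k - 1 - 1 = k - 2 by ring, show k - 1 + 1 = k by ring,
      show k + 1 - 1 = k by ring, show k + 1 + 1 = k + 2 by ring] at h1 h3 p1 p3 key
    push_cast at h1 h2 h3 key ⊢
    linear_combination h1 + h2 + h3 - ((n : ℤ) + 1) * key

/-- constant term sequence -/
noncomputable def a (n : ℕ) : ℤ := (((X (-1) + 1 + X 1) ^ n * (1 - X 2) : LP1)).coeff 0

lemma a_eq (n : ℕ) : a n = t n 0 - t n 2 := by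
  have h : ((X (-1) + 1 + X 1) ^ n * (1 - X 2) : LP1)
      = (X (-1) + 1 + X 1) ^ n - (X (-1) + 1 + X 1) ^ n * X 2 := by ring
  rw [a, h, AddMonoidAlgebra.coeff_sub, Finsupp.sub_apply, coeff_mul_X]
  show t n 0 - t n (0 - 2) = _
  rw [show (0 : ℤ) - 2 = -2 by norm_num, t_symm n 2]

lemma a_rec (n : ℕ) :
    ((n : ℤ) + 4) * a (n + 2) = (2 * (n : ℤ) + 5) * a (n + 1) + 3 * ((n : ℤ) + 1) * a n := by
  have A00 : t (n + 2) 0 = t (n + 1) (0 - 1) + t (n + 1) 0 + t (n + 1) (0 + 1) :=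
    pascal (n + 1) 0
  have A01 : t (n + 2) 1 = t (n + 1) (1 - 1) + t (n + 1) 1 + t (n + 1) (1 + 1) :=
    pascal (n + 1) 1
  have A02 : t (n + 2) 2 = t (n + 1) (2 - 1) + t (n + 1) 2 + t (n + 1) (2 + 1) :=
    pascal (n + 1) 2
  have B01 := deriv (n + 1) 1
  have B02 := deriv (n + 1) 2
  have B11 := deriv n 1
  have sym : t (n + 1) (0 - 1) = t (n + 1) (0 + 1) := by
    rw [show (0 : ℤ) - 1 = -1 by norm_num]
    rw [show (0 : ℤ) + 1 = 1 by norm_num]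
    exact t_symm (n + 1) 1
  push_cast at B01 B02 B11
  norm_num only at A00 A01 A02 B01 B02 B11 sym
  rw [a_eq, a_eq, a_eq]
  linear_combination ((n : ℤ) + 4) * A00 - A01 + B01 - ((n : ℤ) + 2) * A02 - B02 + 3 * B11
    + ((n : ℤ) + 4) * sym

lemma a_zero : a 0 = 1 := by
  rw [a_eq, t_zero, t_zero]; norm_num

lemma a_one : a 1 = 1 := by
  rw [a_eq, pascal, pascal]
  simp only [t_zero]
  norm_num

end MotzkinAux

/-- The Motzkin number `M(n)` (defined by `M(0) = M(1) = 1` and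
`(n+2)·M(n) = (2n+1)·M(n−1) + 3(n−1)·M(n−2)` for `n ≥ 2`) is the constant term
of `(x⁻¹ + 1 + x)^n (1 - x²)`. -/
theorem motzkin_eq_constantTerm (M : ℕ → ℤ)
    (hM0 : M 0 = 1) (hM1 : M 1 = 1)
    (hrec : ∀ n : ℕ, 2 ≤ n →
      ((n : ℤ) + 2) * M n = (2 * (n : ℤ) + 1) * M (n - 1) + 3 * ((n : ℤ) - 1) * M (n - 2))
    (n : ℕ) :
    (((X (-1) + 1 + X 1) ^ n * (1 - X 2)) : LP1).coeff 0 = M n := by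
  suffices h : ∀ m : ℕ, MotzkinAux.a m = M m from h n
  intro m
  induction m using Nat.twoStepInduction with
  | zero => rw [MotzkinAux.a_zero, hM0]
  | one => rw [MotzkinAux.a_one, hM1]
  | more k ih1 ih2 =>
    have hr := hrec (k + 2) (by omega)
    have ha := MotzkinAux.a_rec k
    rw [show k + 2 - 1 = k + 1 from rfl, show k + 2 - 2 = k from rfl] at hr
    push_cast at hr
    rw [ih1, ih2] at ha
    have hne : ((k : ℤ) + 4) ≠ 0 := by positivity
    have heq : ((k : ℤ) + 4) * MotzkinAux.a (k + 2) = ((k : ℤ) + 4) * M (k + 2) := by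
      rw [ha]; linarith
    exact mul_left_cancel₀ hne heq
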